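/- For every m ≥ 2, the Cartesian product graph [mΓ(Z_9) + Γ(Z_4)] × Γ(Z_9) on 4m+2 vertices admits a distance antimagic labeling. -/

import Mathlib

open SimpleGraph

/-- The zero-divisor graph of a commutative ring: vertices are the nonzero
zero-divisors, adjacency is `u ≠ v ∧ u * v = 0`. -/
def zeroDivisorGraph (R : Type*) [CommRing R] :
    SimpleGraph {x : R // x ≠ 0 ∧ ∃ y ≠ 0, x * y = 0} where
  Adj u v := u ≠ v ∧ (u : R) * (v : R) = 0
  symm := by
    constructor
    rintro u v ⟨h1, h2⟩
    exact ⟨h1.symm, by rwa [mul_comm]⟩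
  loopless := by constructor; rintro u ⟨h, -⟩; exact h rfl

/-- The join `G + H` of two graphs on disjoint vertex sets: all edges of `G`
and `H`, plus all edges between the two parts. -/
def joinG {α β : Type*} (G : SimpleGraph α) (H : SimpleGraph β) :
    SimpleGraph (α ⊕ β) where
  Adj u v :=
    match u, v with
    | Sum.inl a, Sum.inl b => G.Adj a b
    | Sum.inr a, Sum.inr b => H.Adj a b
    | _, _ => True
  symm := by
    constructor
    rintro (a | a) (b | b) h
    · exact h.symm
    · trivial
    · trivial
    · exact h.symm
  loopless := by
    constructor
    rintro (a | a) h
    · exact G.ne_of_adj h rfl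
    · exact H.ne_of_adj h rfl

/-- `m` disjoint copies of the graph `G`. -/
def copies {V : Type*} (m : ℕ) (G : SimpleGraph V) : SimpleGraph (Fin m × V) where
  Adj u v := u.1 = v.1 ∧ G.Adj u.2 v.2
  symm := by constructor; rintro u v ⟨h1, h2⟩; exact ⟨h1.symm, h2.symm⟩
  loopless := by constructor; rintro u ⟨-, h⟩; exact G.ne_of_adj h rfl

/-- A graph `G` on `n` vertices admits a distance antimagic labeling if there is
a bijective labeling of the vertices by `1, …, n` whose open-neighborhood sums
(weights) are pairwise distinct. -/
def IsDistanceAntimagic {V : Type*} (G : SimpleGraph V) : Prop :=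
  ∃ f : V ≃ Fin (Nat.card V),
    Function.Injective fun u => ∑ᶠ x ∈ G.neighborSet u, ((f x : ℕ) + 1)

/-! ### Auxiliary construction -/

abbrev Vm (m : ℕ) := ((Fin m × Fin 2) ⊕ Fin 1) × Fin 2

noncomputable def Gr (m : ℕ) : SimpleGraph (Vm m) :=
  (joinG (copies m (⊤ : SimpleGraph (Fin 2))) (⊤ : SimpleGraph (Fin 1))) □
    (⊤ : SimpleGraph (Fin 2))

/-- The labels (1-based). -/
def Lab (m : ℕ) : Vm m → ℕ
  | (Sum.inl (i, j), t) => if (t : ℕ) = 0 then 2*i+3+j else 2*m+2*i+4-(j:ℕ)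
  | (Sum.inr _, t) => 1 + t

lemma Lab_pos (m : ℕ) (v : Vm m) : 1 ≤ Lab m v := by
  rcases v with ⟨(⟨i, j⟩ | c), t⟩ <;> simp [Lab] <;> split <;> omega

lemma Lab_le (m : ℕ) (v : Vm m) : Lab m v ≤ 4*m+2 := by
  rcases v with ⟨(⟨i, j⟩ | c), t⟩ <;> simp [Lab]
  · have := i.isLt; have := j.isLt; split <;> omega
  · have := t.isLt; omega

lemma Lab_inj (m : ℕ) : Function.Injective (Lab m) := by
  rintro ⟨(⟨i, j⟩ | c), t⟩ ⟨(⟨i', j'⟩ | c'), t'⟩ h <;> simp [Lab] at h ⊢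
  · have hi := i.isLt; have hi' := i'.isLt
    have hj := j.isLt; have hj' := j'.isLt
    have ht := t.isLt; have ht' := t'.isLt
    split at h <;> split at h <;>
      refine ⟨⟨Fin.ext ?_, Fin.ext ?_⟩, Fin.ext ?_⟩ <;> omega
  · have hi := i.isLt; have := j.isLt; have := t'.isLt; split at h <;> omega
  · have hi := i'.isLt; have := j'.isLt; have := t.isLt; split at h <;> omega
  · have := t.isLt; have := t'.isLt
    exact ⟨Subsingleton.elim _ _, Fin.ext (by omega)⟩

lemma card_Vm (m : ℕ) : Nat.card (Vm m) = 4*m+2 := by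
  simp [Nat.card_eq_fintype_card]
  ring

def f0 (m : ℕ) : Vm m → Fin (4*m+2) := fun v =>
  ⟨Lab m v - 1, by have := Lab_le m v; have := Lab_pos m v; omega⟩

lemma f0_bij (m : ℕ) : Function.Bijective (f0 m) := by
  have hinj : Function.Injective (f0 m) := by
    intro u v h
    apply Lab_inj m
    have := Lab_pos m u; have := Lab_pos m v
    have : Lab m u - 1 = Lab m v - 1 := congrArg Fin.val h
    omega
  refine (Fintype.bijective_iff_injective_and_card (f0 m)).mpr ⟨hinj, ?_⟩
  simp
  ring

noncomputable def labEquiv (m : ℕ) : Vm m ≃ Fin (Nat.card (Vm m)) :=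
  (Equiv.ofBijective (f0 m) (f0_bij m)).trans (finCongr (card_Vm m).symm)

lemma labEquiv_val (m : ℕ) (v : Vm m) : ((labEquiv m v : ℕ)) + 1 = Lab m v := by
  have := Lab_pos m v
  simp [labEquiv, f0, Equiv.trans_apply, Equiv.ofBijective_apply]
  omega

lemma nbr_copy (m : ℕ) (i : Fin m) (j t : Fin 2) :
    (Gr m).neighborSet (Sum.inl (i, j), t) =
      ↑({(Sum.inl (i, 1-j), t), (Sum.inr 0, t), (Sum.inl (i, j), 1-t)} :
        Finset (Vm m)) := by
  ext ⟨(⟨a, b⟩ | c), s⟩ <;>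
    simp [Gr, joinG, copies, boxProd_adj, neighborSet, Prod.ext_iff] <;>
    first
      | (fin_cases j <;> fin_cases b <;> fin_cases t <;> fin_cases s <;>
          simp_all [eq_comm])
      | (exact ⟨fun h => ⟨Fin.eq_zero _, h.symm⟩, fun h => h.2.symm⟩)

lemma nbr_hub (m : ℕ) (c : Fin 1) (t : Fin 2) :
    (Gr m).neighborSet (Sum.inr c, t) =
      ↑(((Finset.univ : Finset (Fin m × Fin 2)).image
          (fun p => ((Sum.inl p, t) : Vm m))) ∪ {((Sum.inr 0, 1-t) : Vm m)}) := by
  ext ⟨(⟨a, b⟩ | d), s⟩ <;>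
    simp [Gr, joinG, copies, boxProd_adj, neighborSet, Prod.ext_iff] <;>
    first
      | (fin_cases t <;> fin_cases s <;>
          simp_all [Fin.eq_zero c, Fin.eq_zero d, eq_comm])
      | simp [eq_comm]

/-- The weights. -/
def Wt (m : ℕ) : Vm m → ℕ
  | (Sum.inl (i, j), t) =>
      if (t : ℕ) = 0 then 4*i+2*m+9-2*(j:ℕ) else 4*i+2*m+8+2*(j:ℕ)
  | (Sum.inr _, t) =>
      if (t : ℕ) = 0 then 4*(∑ i ∈ Finset.range m, i)+7*m+2
      else 4*(m*m)+4*(∑ i ∈ Finset.range m, i)+7*m+1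

lemma wt_copy (m : ℕ) (i : Fin m) (j t : Fin 2) :
    (∑ᶠ x ∈ (Gr m).neighborSet (Sum.inl (i, j), t), Lab m x) =
      Wt m (Sum.inl (i, j), t) := by
  rw [nbr_copy, finsum_mem_coe_finset]
  fin_cases j <;> fin_cases t <;>
    rw [Finset.sum_insert (by simp), Finset.sum_insert (by simp),
      Finset.sum_singleton] <;>
    simp [Lab, Wt] <;> omega

lemma wt_hub (m : ℕ) (c : Fin 1) (t : Fin 2) :
    (∑ᶠ x ∈ (Gr m).neighborSet (Sum.inr c, t), Lab m x) =
      Wt m (Sum.inr c, t) := by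
  rw [nbr_hub, finsum_mem_coe_finset,
    Finset.sum_union (by simp [Finset.disjoint_left]),
    Finset.sum_image (by intro a _ b _ h; simpa using h), Finset.sum_singleton]
  have h1 : ∑ x : Fin m, 2*(2*(x:ℕ)) = ∑ i ∈ Finset.range m, 4*i := by
    rw [Fin.sum_univ_eq_sum_range (fun x => 2*(2*x)) m]
    exact Finset.sum_congr rfl fun x _ => by ring
  have h2 : ∑ x : Fin m, ∑ i ∈ Finset.range 2, (2*m+2*(x:ℕ)+4 - i)
      = ∑ i ∈ Finset.range m, (4*m + 4*i + 7) := by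
    rw [Fin.sum_univ_eq_sum_range
      (fun x => ∑ i ∈ Finset.range 2, (2*m+2*x+4 - i)) m]
    refine Finset.sum_congr rfl fun x _ => ?_
    simp [Finset.sum_range_succ]
    omega
  have h3 : ∑ i ∈ Finset.range m, (4*m + 4*i + 7)
      = 4*(m*m) + (∑ i ∈ Finset.range m, 4*i) + 7*m := by
    rw [Finset.sum_add_distrib, Finset.sum_add_distrib, Finset.sum_const,
      Finset.card_range, Finset.sum_const, Finset.card_range, smul_eq_mul,
      smul_eq_mul]
    ring
  fin_cases t <;>
    simp [Lab, Wt, Fintype.sum_prod_type, Fin.sum_univ_two,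
      Fin.sum_univ_eq_sum_range, Finset.sum_add_distrib, Finset.mul_sum] <;>
    [rw [h1]; rw [h2, h3]] <;>
    omega


lemma Wt_inj (m : ℕ) (hm : 2 ≤ m) : Function.Injective (Wt m) := by
  have hs : (∑ i ∈ Finset.range m, i) * 2 + m = m*m := by
    rw [Finset.sum_range_id_mul_two]
    cases m with
    | zero => simp
    | succ n => simp [Nat.succ_sub_one]; ring
  have hmm : 2*m ≤ m*m := Nat.mul_le_mul_right m hm
  rintro ⟨(⟨i, j⟩ | c), t⟩ ⟨(⟨i', j'⟩ | c'), t'⟩ h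
  · have hi := i.isLt; have hi' := i'.isLt
    fin_cases j <;> fin_cases t <;> fin_cases j' <;> fin_cases t' <;>
      simp [Wt] at h ⊢ <;>
      first
        | exact Fin.ext (by omega)
        | omega
        | (exfalso; omega)
  · have hi := i.isLt
    exfalso
    fin_cases j <;> fin_cases t <;> fin_cases t' <;> simp [Wt] at h <;> omega
  · have hi := i'.isLt
    exfalso
    fin_cases j' <;> fin_cases t <;> fin_cases t' <;> simp [Wt] at h <;> omega
  · fin_cases t <;> fin_cases t' <;> simp [Wt] at h ⊢ <;>
      first
        | exact Subsingleton.elim _ _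
        | omega
        | (exfalso; omega)

theorem stmt15 (m : ℕ) (hm : 2 ≤ m) :
    IsDistanceAntimagic
      ((joinG (copies m (⊤ : SimpleGraph (Fin 2))) (⊤ : SimpleGraph (Fin 1))) □
        (⊤ : SimpleGraph (Fin 2))) := by
  refine ⟨labEquiv m, ?_⟩
  have key : ∀ u : Vm m,
      (∑ᶠ x ∈ (Gr m).neighborSet u, ((labEquiv m x : ℕ) + 1)) = Wt m u := by
    intro u
    rw [finsum_mem_congr rfl (fun x _ => labEquiv_val m x)]
    rcases u with ⟨(⟨i, j⟩ | c), t⟩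
    · exact wt_copy m i j t
    · exact wt_hub m c t
  intro u v huv
  apply Wt_inj m hm
  rw [← key u, ← key v]
  exact huv
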